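/- (Generalized Moyal identity) For any four Schwartz functions ψ₁, ψ₂, χ₁, χ₂ : ℝ → ℂ, the integrated overlapping product of the generalized Wigner distributions satisfies ∫_ℝ ∫_ℝ W_{(ψ₁,ψ₂)}(x,p) · W_{(χ₁,χ₂)}(x,p) dx dp = (1/(2πħ)) · (∫_ℝ conj(ψ₁(x)) χ₂(x) dx) · (∫_ℝ conj(χ₁(x)) ψ₂(x) dx). -/

import Mathlib

open MeasureTheory

/-- The generalized Wigner distribution of a pair of wavefunctions `ψ₁, ψ₂ : ℝ → ℂ`:
`W_{(ψ₁,ψ₂)}(x,p) = (1/(2π hbar)) ∫ conj(ψ₁(x + x'/2)) ψ₂(x - x'/2) exp(i p x'/hbar) dx'`. -/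
noncomputable def wignerPair (hbar : ℝ) (ψ₁ ψ₂ : ℝ → ℂ) (x p : ℝ) : ℂ :=
  ((1 / (2 * Real.pi * hbar) : ℝ) : ℂ) *
    ∫ x' : ℝ, (starRingEnd ℂ) (ψ₁ (x + x' / 2)) * ψ₂ (x - x' / 2) *
      Complex.exp (Complex.I * (p : ℂ) * (x' : ℂ) / (hbar : ℂ))

/-! For fixed `x`, `p ↦ W_{(ψ₁,ψ₂)}(x,p)` is a rescaled Fourier transform of the Schwartz function
`t ↦ conj ψ₁(x + t/2) ψ₂(x - t/2)`. Parseval's identity therefore turns the `p`-integral of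
`W_{(ψ₁,ψ₂)} W_{(χ₁,χ₂)}` into `(1/2πħ) ∫ conj ψ₁(x+t/2) χ₂(x+t/2) conj χ₁(x-t/2) ψ₂(x-t/2) dt`,
and the change of variables `(x,t) ↦ (x+t/2, x-t/2)`, of Jacobian `-1`, factors the remaining
`x`-integral into the two overlaps. Plancherel's theorem also puts each Wigner function in
`L²(ℝ²)`, so the product of two of them is integrable and the `p`- and `x`-integrals commute. -/

open Real SchwartzMap
open scoped FourierTransform SchwartzMap

noncomputable section

def addHalfSubHalfEquiv : ℝ × ℝ ≃ᵐ ℝ × ℝ where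
  toFun q := (q.1 + q.2 / 2, q.1 - q.2 / 2)
  invFun q := ((q.1 + q.2) / 2, q.1 - q.2)
  left_inv q := by ext <;> simp
  right_inv q := by ext <;> simp <;> ring
  measurable_toFun := by dsimp; fun_prop
  measurable_invFun := by dsimp; fun_prop

lemma addHalfSubHalfEquiv_apply (q : ℝ × ℝ) :
    addHalfSubHalfEquiv q = (q.1 + q.2 / 2, q.1 - q.2 / 2) := rfl

lemma measurePreserving_addHalfSubHalfEquiv :
    MeasurePreserving addHalfSubHalfEquiv (volume.prod volume) (volume.prod volume) := by
  have shear : MeasurePreserving (fun q : ℝ × ℝ => (q.1, q.2 + q.1 / 2))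
      (volume.prod volume) (volume.prod volume) :=
    (MeasurePreserving.id volume).skew_product (by fun_prop)
      (ae_of_all _ fun t => map_add_right_eq_self volume (t / 2))
  have reflect : MeasurePreserving (fun q : ℝ × ℝ => (q.1, q.1 - q.2))
      (volume.prod volume) (volume.prod volume) :=
    (MeasurePreserving.id volume).skew_product (by fun_prop)
      (ae_of_all _ fun u => Measure.map_sub_left_eq_self volume u)
  convert reflect.comp (Measure.measurePreserving_swap.comp
    (shear.comp Measure.measurePreserving_swap)) using 1
  ext q <;> simp only [addHalfSubHalfEquiv_apply, Function.comp_apply, Prod.fst_swap,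
    Prod.snd_swap]
  ring

section Factorization

variable {𝕜 : Type*} [RCLike 𝕜] {f g : ℝ → 𝕜}

lemma integrable_mul_comp_add_half_sub_half (hf : Integrable f) (hg : Integrable g) :
    Integrable (fun q : ℝ × ℝ => f (q.1 + q.2 / 2) * g (q.1 - q.2 / 2)) (volume.prod volume) :=
  (measurePreserving_addHalfSubHalfEquiv.integrable_comp_emb
    addHalfSubHalfEquiv.measurableEmbedding).2 (hf.mul_prod hg)

lemma integral_integral_mul_comp_add_half_sub_half (hf : Integrable f) (hg : Integrable g) :
    ∫ x, ∫ t, f (x + t / 2) * g (x - t / 2) = (∫ u, f u) * ∫ v, g v := by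
  rw [← integral_prod_mul, ← measurePreserving_addHalfSubHalfEquiv.integral_comp',
    ← integral_prod _ (integrable_mul_comp_add_half_sub_half hf hg)]
  rfl

end Factorization

namespace SchwartzMap

section Fourier

variable {V E : Type*} [NormedAddCommGroup V] [InnerProductSpace ℝ V] [FiniteDimensional ℝ V]
  [MeasurableSpace V] [BorelSpace V] [NormedAddCommGroup E] [NormedSpace ℂ E] [CompleteSpace E]

lemma fourier_fourier_apply (f : 𝓢(V, E)) (v : V) : 𝓕 (𝓕 f) v = f (-v) :=
  calc 𝓕 (𝓕 f) v = 𝓕⁻ (𝓕 f) (-v) := by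
        rw [fourierInv_coe, Real.fourierInv_eq_fourier_neg, neg_neg, fourier_coe]
    _ = f (-v) := by rw [FourierTransform.fourierInv_fourier_eq]

end Fourier

lemma integral_fourier_div_mul_fourier_div (f g : 𝓢(ℝ, ℂ)) (a : ℝ) :
    ∫ p, 𝓕 f (p / a) * 𝓕 g (p / a) = |a| * ∫ t, f t * g (-t) := by
  rw [Measure.integral_comp_div (fun ξ => 𝓕 f ξ * 𝓕 g ξ), integral_fourier_mul_eq,
    Complex.real_smul]
  simp only [fourier_fourier_apply]

lemma integral_norm_fourier_div_sq (f : 𝓢(ℝ, ℂ)) (a : ℝ) :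
    ∫ p, ‖𝓕 f (p / a)‖ ^ 2 = |a| * ∫ t, ‖f t‖ ^ 2 := by
  rw [Measure.integral_comp_div (fun ξ => ‖𝓕 f ξ‖ ^ 2), integral_norm_sq_fourier, smul_eq_mul]

lemma integrable_norm_fourier_div_sq (f : 𝓢(ℝ, ℂ)) {a : ℝ} (ha : a ≠ 0) :
    Integrable fun p => ‖𝓕 f (p / a)‖ ^ 2 :=
  ((𝓕 f).memLp 2).integrable_norm_pow two_ne_zero |>.comp_div ha

lemma integrable_conj_mul (φ₁ φ₂ : 𝓢(ℝ, ℂ)) : Integrable fun u => starRingEnd ℂ (φ₁ u) * φ₂ u :=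
  (φ₁.memLp 2).star.integrable_mul (φ₂.memLp 2)

variable {F : Type*} [NormedAddCommGroup F] [NormedSpace ℝ F]

def compAffine (φ : 𝓢(ℝ, F)) (a : ℝ) {c : ℝ} (hc : c ≠ 0) : 𝓢(ℝ, F) :=
  compCLMOfAntilipschitz ℝ (g := fun t => a + c * t) (K := ‖c‖₊⁻¹) (by fun_prop)
    (AntilipschitzWith.of_le_mul_dist fun s t => by
      rw [dist_eq_norm, dist_eq_norm, add_sub_add_left_eq_sub, ← mul_sub, norm_mul,
        NNReal.coe_inv, coe_nnnorm, inv_mul_cancel_left₀ (norm_ne_zero_iff.2 hc)]) φ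

@[simp] lemma compAffine_apply (φ : 𝓢(ℝ, F)) (a : ℝ) {c : ℝ} (hc : c ≠ 0) (t : ℝ) :
    compAffine φ a hc t = φ (a + c * t) := rfl

end SchwartzMap

def wignerCorrelation (φ₁ φ₂ : 𝓢(ℝ, ℂ)) (x : ℝ) : 𝓢(ℝ, ℂ) :=
  bilinLeftCLM (ContinuousLinearMap.mul ℝ ℂ)
    (compAffine φ₂ x (c := -(1 / 2)) (by norm_num)).hasTemperateGrowth
    (postcompCLM (Complex.conjCLE : ℂ →L[ℝ] ℂ) (compAffine φ₁ x (c := 1 / 2) (by norm_num)))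

lemma wignerCorrelation_apply (φ₁ φ₂ : 𝓢(ℝ, ℂ)) (x t : ℝ) :
    wignerCorrelation φ₁ φ₂ x t = starRingEnd ℂ (φ₁ (x + t / 2)) * φ₂ (x - t / 2) := by
  simp only [wignerCorrelation, bilinLeftCLM_apply, postcompCLM_apply, compAffine_apply,
    ContinuousLinearMap.mul_apply', ContinuousLinearEquiv.coe_coe, Complex.conjCLE_apply]
  ring_nf

lemma wignerCorrelation_mul_wignerCorrelation_neg (ψ₁ ψ₂ χ₁ χ₂ : 𝓢(ℝ, ℂ)) (x t : ℝ) :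
    wignerCorrelation ψ₁ ψ₂ x t * wignerCorrelation χ₁ χ₂ x (-t) =
      starRingEnd ℂ (ψ₁ (x + t / 2)) * χ₂ (x + t / 2) *
        (starRingEnd ℂ (χ₁ (x - t / 2)) * ψ₂ (x - t / 2)) := by
  simp only [wignerCorrelation_apply, neg_div, ← sub_eq_add_neg, sub_neg_eq_add]
  ring

lemma aestronglyMeasurable_wignerPair (hbar : ℝ) (ψ₁ ψ₂ : 𝓢(ℝ, ℂ)) :
    AEStronglyMeasurable (fun q : ℝ × ℝ => wignerPair hbar ψ₁ ψ₂ q.2 q.1) (volume.prod volume) := by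
  have hcont : Continuous fun z : (ℝ × ℝ) × ℝ =>
      starRingEnd ℂ (ψ₁ (z.1.2 + z.2 / 2)) * ψ₂ (z.1.2 - z.2 / 2) *
        Complex.exp (Complex.I * z.1.1 * z.2 / hbar) := by
    fun_prop
  exact (hcont.stronglyMeasurable.integral_prod_right' (ν := volume)).aestronglyMeasurable.const_mul _

variable {hbar : ℝ}

-- Mathlib's `𝓕` has kernel `exp (-2πi t ξ)`, whence the frequency `ξ = -p / (2πħ)`.
lemma wignerPair_eq_fourier (hh : hbar ≠ 0) (ψ₁ ψ₂ : 𝓢(ℝ, ℂ)) (x p : ℝ) :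
    wignerPair hbar ψ₁ ψ₂ x p = ((1 / (2 * π * hbar) : ℝ) : ℂ) *
      𝓕 (wignerCorrelation ψ₁ ψ₂ x) (p / -(2 * π * hbar)) := by
  rw [wignerPair, fourier_coe, Real.fourier_real_eq_integral_exp_smul]
  congr 1
  refine integral_congr_ae (ae_of_all _ fun t => ?_)
  have hphase : -2 * π * t * (p / -(2 * π * hbar)) = p * t / hbar := by field_simp
  dsimp only
  rw [wignerCorrelation_apply, smul_eq_mul, hphase]
  push_cast
  ring_nf

lemma integral_wignerPair_mul_wignerPair (hh : 0 < hbar) (ψ₁ ψ₂ χ₁ χ₂ : 𝓢(ℝ, ℂ)) (x : ℝ) :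
    ∫ p, wignerPair hbar ψ₁ ψ₂ x p * wignerPair hbar χ₁ χ₂ x p =
      ((1 / (2 * π * hbar) : ℝ) : ℂ) *
        ∫ t, wignerCorrelation ψ₁ ψ₂ x t * wignerCorrelation χ₁ χ₂ x (-t) := by
  have hprod (p : ℝ) : wignerPair hbar ψ₁ ψ₂ x p * wignerPair hbar χ₁ χ₂ x p =
      ((1 / (2 * π * hbar) : ℝ) : ℂ) * ((1 / (2 * π * hbar) : ℝ) : ℂ) *
        (𝓕 (wignerCorrelation ψ₁ ψ₂ x) (p / -(2 * π * hbar)) *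
          𝓕 (wignerCorrelation χ₁ χ₂ x) (p / -(2 * π * hbar))) := by
    rw [wignerPair_eq_fourier hh.ne', wignerPair_eq_fourier hh.ne']
    ring
  simp_rw [hprod]
  rw [integral_const_mul, integral_fourier_div_mul_fourier_div, abs_neg,
    abs_of_pos (by positivity), ← mul_assoc]
  congr 1
  push_cast
  field_simp

lemma integral_norm_wignerPair_sq (hh : 0 < hbar) (ψ₁ ψ₂ : 𝓢(ℝ, ℂ)) (x : ℝ) :
    ∫ p, ‖wignerPair hbar ψ₁ ψ₂ x p‖ ^ 2 =
      1 / (2 * π * hbar) * ∫ t, ‖wignerCorrelation ψ₁ ψ₂ x t‖ ^ 2 := by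
  simp_rw [wignerPair_eq_fourier hh.ne', norm_mul, mul_pow, Complex.norm_real]
  rw [integral_const_mul, integral_norm_fourier_div_sq, abs_neg, abs_of_pos (by positivity),
    ← mul_assoc]
  congr 1
  rw [Real.norm_of_nonneg (by positivity)]
  field_simp

lemma memLp_wignerPair (hh : 0 < hbar) (ψ₁ ψ₂ : 𝓢(ℝ, ℂ)) :
    MemLp (fun q : ℝ × ℝ => wignerPair hbar ψ₁ ψ₂ q.2 q.1) 2 (volume.prod volume) := by
  have hm := aestronglyMeasurable_wignerPair hbar ψ₁ ψ₂
  have hsq (φ : 𝓢(ℝ, ℂ)) : Integrable fun u => ‖φ u‖ ^ 2 :=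
    (φ.memLp 2).integrable_norm_pow two_ne_zero
  rw [memLp_two_iff_integrable_sq_norm hm]
  refine (integrable_prod_iff' (hm.norm.pow 2)).2 ⟨ae_of_all _ fun x => ?_, ?_⟩
  · simp_rw [Pi.pow_apply, wignerPair_eq_fourier hh.ne', norm_mul, mul_pow]
    exact (integrable_norm_fourier_div_sq _ (neg_ne_zero.2 (by positivity))).const_mul _
  · simp_rw [Pi.pow_apply, norm_pow, norm_norm, integral_norm_wignerPair_sq hh,
      wignerCorrelation_apply, norm_mul, mul_pow, RCLike.norm_conj]
    exact ((integrable_mul_comp_add_half_sub_half (hsq ψ₁) (hsq ψ₂)).integral_prod_left).const_mul _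

lemma integrable_wignerPair_mul_wignerPair (hh : 0 < hbar) (ψ₁ ψ₂ χ₁ χ₂ : 𝓢(ℝ, ℂ)) :
    Integrable (Function.uncurry fun p x => wignerPair hbar ψ₁ ψ₂ x p * wignerPair hbar χ₁ χ₂ x p)
      (volume.prod volume) :=
  (memLp_wignerPair hh ψ₁ ψ₂).integrable_mul (memLp_wignerPair hh χ₁ χ₂)

end

/-- Generalized Moyal identity:
`∫∫ W_{(ψ₁,ψ₂)} W_{(χ₁,χ₂)} dx dp = (1/(2π hbar)) ⟨ψ₁|χ₂⟩ ⟨χ₁|ψ₂⟩`. -/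
theorem wignerPair_moyal (hbar : ℝ) (hhbar : 0 < hbar)
    (ψ₁ ψ₂ χ₁ χ₂ : SchwartzMap ℝ ℂ) :
    (∫ p : ℝ, ∫ x : ℝ,
        wignerPair hbar (⇑ψ₁) (⇑ψ₂) x p * wignerPair hbar (⇑χ₁) (⇑χ₂) x p) =
      ((1 / (2 * Real.pi * hbar) : ℝ) : ℂ) *
        (∫ x : ℝ, (starRingEnd ℂ) (ψ₁ x) * χ₂ x) *
        (∫ x : ℝ, (starRingEnd ℂ) (χ₁ x) * ψ₂ x) := by
  rw [integral_integral_swap (integrable_wignerPair_mul_wignerPair hhbar ψ₁ ψ₂ χ₁ χ₂)]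
  simp only [integral_wignerPair_mul_wignerPair hhbar,
    wignerCorrelation_mul_wignerCorrelation_neg]
  rw [integral_const_mul, mul_assoc (((1 / (2 * π * hbar) : ℝ) : ℂ)),
    integral_integral_mul_comp_add_half_sub_half (integrable_conj_mul ψ₁ χ₂)
      (integrable_conj_mul χ₁ ψ₂)]
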